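/- arXiv:2410.04839 — 2 statements merged into one kernel-verified Lean document; each statement's English description precedes it below -/
import Mathlib

section
/- Let D ⊆ ℂ be a domain, m ∈ ℕ, and let (f_n)_n be a sequence of meromorphic functions on D such that (f_n^{(m+1)}/f_n^{(m)})_n converges locally uniformly (with respect to the spherical metric) on D to a function F_m meromorphic on D. Then no subsequence of (f_n^{(m)}/f_n^{(m−1)})_n converges locally uniformly to the constant ∞ on D \ P_{F_m}. -/
open Filter Topology
open scoped Classical

noncomputable section

/-- The chordal (spherical) distance on the Riemann sphere `ℂ ∪ {∞} = OnePoint ℂ`. -/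
def sphDist (a b : OnePoint ℂ) : ℝ :=
  Option.elim a (Option.elim b 0 fun w => 2 / Real.sqrt (1 + ‖w‖ ^ 2))
    fun z =>
      Option.elim b (2 / Real.sqrt (1 + ‖z‖ ^ 2)) fun w =>
        2 * ‖z - w‖ / (Real.sqrt (1 + ‖z‖ ^ 2) * Real.sqrt (1 + ‖w‖ ^ 2))

/-- The set of poles of a function `f : ℂ → ℂ`: the points where `‖f‖` tends to `∞`. -/
def polesOf (f : ℂ → ℂ) : Set ℂ :=
  {z | Filter.Tendsto (fun w => ‖f w‖) (𝓝[≠] z) Filter.atTop}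

/-- View a `ℂ`-valued (meromorphic) function as a map into the Riemann sphere:
at its poles the value is `∞`. -/
def toSphere (f : ℂ → ℂ) : ℂ → OnePoint ℂ := fun z =>
  if z ∈ polesOf f then OnePoint.infty else (f z : OnePoint ℂ)

/-- Locally uniform convergence on `U` of sphere-valued functions, with respect to the
spherical (chordal) metric. -/
def SphLocUnifOn (f : ℕ → ℂ → OnePoint ℂ) (g : ℂ → OnePoint ℂ) (U : Set ℂ) : Prop :=
  ∀ ε > (0 : ℝ), ∀ x ∈ U, ∃ t ∈ 𝓝[U] x,
    ∀ᶠ n in Filter.atTop, ∀ y ∈ t, sphDist (f n y) (g y) < ε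

/-- The quotient `f^{(j+1)}/f^{(j)}` of successive derivatives of `f`. -/
def derivQuot (j : ℕ) (f : ℂ → ℂ) : ℂ → ℂ := fun z =>
  iteratedDeriv (j + 1) f z / iteratedDeriv j f z

/-- The derived set of `E` with respect to `D`: accumulation points of `E` lying in `D`. -/
def derivedSetIn (D E : Set ℂ) : Set ℂ := {z ∈ D | AccPt z (Filter.principal E)}

/-- Iterated derived sets of `E` with respect to `D`. -/
def iteratedDerivedSetIn (D : Set ℂ) : ℕ → Set ℂ → Set ℂ
  | 0, E => E
  | k + 1, E => derivedSetIn D (iteratedDerivedSetIn D k E)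

/-- A sequence of functions is `Q_m`-normal on `D`: every subsequence has a further
subsequence converging locally uniformly, with respect to the spherical metric, on `D \ E`
for some set `E ⊆ D` whose `m`-th derived set with respect to `D` is empty. -/
def QmNormalSeqOn (m : ℕ) (D : Set ℂ) (f : ℕ → ℂ → ℂ) : Prop :=
  ∀ φ : ℕ → ℕ, StrictMono φ → ∃ ψ : ℕ → ℕ, StrictMono ψ ∧
    ∃ E ⊆ D, iteratedDerivedSetIn D m E = ∅ ∧
      ∃ g : ℂ → OnePoint ℂ, SphLocUnifOn (fun k => toSphere (f (φ (ψ k)))) g (D \ E)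


open Metric

private lemma analyticAt_deriv' {g : ℂ → ℂ} {x : ℂ} (hg : AnalyticAt ℂ g x) :
    AnalyticAt ℂ (deriv g) x := by
  have : AnalyticOnNhd ℂ g {y | AnalyticAt ℂ g y} := fun y hy => hy
  exact this.deriv x hg

private lemma notPole_of_tendsto {g : ℂ → ℂ} {y c : ℂ}
    (h : Filter.Tendsto g (𝓝[≠] y) (𝓝 c)) : y ∉ polesOf g :=
  fun hp => (h.norm).not_tendsto (disjoint_nhds_atTop _) hp

private lemma value_eq_of_continuousAt {h ψ : ℂ → ℂ} {y : ℂ} {L : ℂ}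
    (heq : ∀ᶠ z in 𝓝[≠] y, h z = ψ z) (hψ : Filter.Tendsto ψ (𝓝[≠] y) (𝓝 L))
    (hc : ContinuousAt h y) : h y = L :=
  tendsto_nhds_unique (tendsto_nhdsWithin_of_tendsto_nhds hc)
    (hψ.congr' (heq.mono fun _ e => e.symm))

private lemma ev_nhds_of_punctured {p : ℂ → Prop} {y : ℂ}
    (h : ∀ᶠ z in 𝓝[≠] y, p z) (hy : p y) : ∀ᶠ z in 𝓝 y, p z := by
  rw [eventually_nhdsWithin_iff] at h
  filter_upwards [h] with z hz
  by_cases hzy : z = y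
  · rwa [hzy]
  · exact hz hzy

private lemma deriv_rep {g h : ℂ → ℂ} {x : ℂ} {n : ℤ} (hg : AnalyticAt ℂ g x)
    (heq : ∀ᶠ z in 𝓝[≠] x, h z = (z - x) ^ n * g z) :
    ∀ᶠ z in 𝓝[≠] x,
      deriv h z = (z - x) ^ (n - 1) * ((n : ℂ) * g z + (z - x) * deriv g z) := by
  have hga : {z | AnalyticAt ℂ g z} ∈ 𝓝[≠] x :=
    nhdsWithin_le_nhds hg.eventually_analyticAt
  obtain ⟨V, hVo, hxV, hV⟩ := mem_nhdsWithin.mp (Filter.inter_mem heq hga)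
  apply mem_nhdsWithin.mpr ⟨V, hVo, hxV, ?_⟩
  rintro z ⟨hzV, hzx⟩
  have hzx' : (z : ℂ) ≠ x := hzx
  have hsub : z - x ≠ 0 := sub_ne_zero.mpr hzx'
  have hWz : (V ∩ {x}ᶜ : Set ℂ) ∈ 𝓝 z :=
    (hVo.inter isOpen_compl_singleton).mem_nhds ⟨hzV, hzx⟩
  have heq' : h =ᶠ[𝓝 z] fun w => (w - x) ^ n * g w :=
    eventuallyEq_of_mem hWz (fun w hw => (hV hw).1)
  have hgz : AnalyticAt ℂ g z := (hV ⟨hzV, hzx⟩).2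
  have h1 : HasDerivAt (fun w : ℂ => (w - x) ^ n) ((n : ℂ) * (z - x) ^ (n - 1) * 1) z := by
    have := (hasDerivAt_zpow n (z - x) (Or.inl hsub)).comp z ((hasDerivAt_id z).sub_const x)
    simpa [Function.comp_def] using this
  have h2 := h1.mul hgz.differentiableAt.hasDerivAt
  have h3 : (z - x) ^ n = (z - x) ^ (n - 1) * (z - x) := by
    rw [← zpow_add_one₀ hsub, sub_add_cancel]
  rw [Set.mem_setOf_eq, heq'.deriv_eq, show deriv (fun w => (w - x) ^ n * g w) z = _ from h2.deriv, h3]; ring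

private lemma coreA {h : ℂ → ℂ} {y : ℂ} (hm : MeromorphicAt h y) {M : ℝ} (hM : 1 ≤ M)
    (hb : ∀ᶠ z in 𝓝 y, z ∉ polesOf (fun w => deriv h w / h w) → M ≤ ‖deriv h z / h z‖) :
    DifferentiableAt ℂ (fun z => h z / deriv h z) y ∧ ‖h y / deriv h y‖ ≤ 1 / M := by
  have hM0 : (0 : ℝ) < M := lt_of_lt_of_le one_pos hM
  set q : ℂ → ℂ := fun w => deriv h w / h w with hqdef
  rcases eq_or_ne (meromorphicOrderAt h y) ⊤ with htop | hne
  · -- order ⊤ : impossible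
    exfalso
    have hzero : ∀ᶠ z in 𝓝[≠] y, h z = 0 := meromorphicOrderAt_eq_top_iff.mp htop
    obtain ⟨V, hVo, hyV, hV⟩ :=
      mem_nhdsWithin.mp (Filter.inter_mem hzero (nhdsWithin_le_nhds hb))
    have hq0 : ∀ w ∈ V ∩ {y}ᶜ, q w = 0 := by
      intro w hw
      have hh0w : h =ᶠ[𝓝 w] fun _ => 0 :=
        eventuallyEq_of_mem ((hVo.inter isOpen_compl_singleton).mem_nhds hw)
          (fun u hu => (hV hu).1)
      simp [hqdef, hh0w.deriv_eq, deriv_const]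
    have hVne : ∀ᶠ z in 𝓝[≠] y, z ∈ V ∩ {y}ᶜ := by
      have h1 : ∀ᶠ z in 𝓝[≠] y, z ∈ V := nhdsWithin_le_nhds (hVo.mem_nhds hyV)
      filter_upwards [h1, self_mem_nhdsWithin] with z h1 h2 using ⟨h1, h2⟩
    obtain ⟨z, hzV⟩ := hVne.exists
    have hnp : z ∉ polesOf q := by
      apply notPole_of_tendsto (c := 0)
      apply Filter.Tendsto.congr' _ tendsto_const_nhds
      exact (eventuallyEq_of_mem
        (nhdsWithin_le_nhds (((hVo.inter isOpen_compl_singleton).mem_nhds hzV)))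
        (fun u hu => (hq0 u hu).symm))
    have hcontra := (hV hzV).2 hnp
    rw [show deriv h z / h z = 0 from hq0 z hzV, norm_zero] at hcontra
    linarith
  · obtain ⟨n, hn⟩ := WithTop.ne_top_iff_exists.mp hne
    obtain ⟨g, hg, hg0, heq0⟩ := (meromorphicOrderAt_eq_int_iff (n := n) hm).mp hn.symm
    have heq : ∀ᶠ z in 𝓝[≠] y, h z = (z - y) ^ n * g z :=
      heq0.mono fun z hz => by simpa [smul_eq_mul] using hz
    have hder := deriv_rep hg heq
    set d : ℂ → ℂ := fun z => (n : ℂ) * g z + (z - y) * deriv g z with hddef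
    have hdan : AnalyticAt ℂ d y :=
      (analyticAt_const.mul hg).add ((analyticAt_id.sub analyticAt_const).mul
        (analyticAt_deriv' hg))
    have hgan : ∀ᶠ z in 𝓝[≠] y, AnalyticAt ℂ g z := nhdsWithin_le_nhds hg.eventually_analyticAt
    have hgne : ∀ᶠ z in 𝓝[≠] y, g z ≠ 0 :=
      nhdsWithin_le_nhds (hg.continuousAt.eventually_ne hg0)
    have hbb : ∀ᶠ z in 𝓝[≠] y, (z ∉ polesOf q → M ≤ ‖q z‖) := nhdsWithin_le_nhds hb
    obtain ⟨V, hVo, hyV, hV⟩ :=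
      mem_nhdsWithin.mp (heq.and (hder.and (hgan.and (hgne.and hbb))))
    have hmemV : ∀ᶠ z in 𝓝[≠] y, z ∈ V ∩ {y}ᶜ := by
      have h1 : ∀ᶠ z in 𝓝[≠] y, z ∈ V := nhdsWithin_le_nhds (hVo.mem_nhds hyV)
      filter_upwards [h1, self_mem_nhdsWithin] with z h1 h2 using ⟨h1, h2⟩
    rcases eq_or_ne n 0 with hn0 | hn0
    · -- n = 0
      have he_g : ∀ z ∈ V ∩ {y}ᶜ, h z = g z := by
        rintro z hz
        have := (hV hz).1
        rwa [hn0, zpow_zero, one_mul] at this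
      have hloc : ∀ z ∈ V ∩ {y}ᶜ, h =ᶠ[𝓝 z] g := fun z hz =>
        eventuallyEq_of_mem ((hVo.inter isOpen_compl_singleton).mem_nhds hz) he_g
      have hqg : ∀ z ∈ V ∩ {y}ᶜ, q z = deriv g z / g z := by
        intro z hz
        simp only [hqdef]
        rw [(hloc z hz).deriv_eq, he_g z hz]
      have hqevg : ∀ᶠ z in 𝓝[≠] y, q z = deriv g z / g z := by
        filter_upwards [hmemV] with z hz using hqg z hz
      -- z near y, z ≠ y is not a pole of q
      have hnearnp : ∀ z ∈ V ∩ {y}ᶜ, z ∉ polesOf q := by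
        intro z hz
        have hgz : AnalyticAt ℂ g z := (hV hz).2.2.1
        have hgz0 : g z ≠ 0 := (hV hz).2.2.2.1
        have hcont : Filter.Tendsto (fun w => deriv g w / g w) (𝓝 z)
            (𝓝 (deriv g z / g z)) :=
          (analyticAt_deriv' hgz).continuousAt.div hgz.continuousAt hgz0
        apply notPole_of_tendsto (c := deriv g z / g z)
        apply Filter.Tendsto.congr' _ (tendsto_nhdsWithin_of_tendsto_nhds hcont)
        apply Filter.EventuallyEq.symm
        apply eventuallyEq_of_mem
          (nhdsWithin_le_nhds (((hVo.inter isOpen_compl_singleton).mem_nhds hz)))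
        exact fun u hu => hqg u hu
      -- deriv g y ≠ 0
      have hdgy : deriv g y ≠ 0 := by
        intro hdg0
        have hcont : Filter.Tendsto (fun w => deriv g w / g w) (𝓝 y) (𝓝 0) := by
          have h0 : Filter.Tendsto (fun w => deriv g w / g w) (𝓝 y)
              (𝓝 (deriv g y / g y)) :=
            (analyticAt_deriv' hg).continuousAt.div hg.continuousAt hg0
          rwa [hdg0, zero_div] at h0
        have hsmall : ∀ᶠ z in 𝓝[≠] y, ‖deriv g z / g z‖ < M := by
          have := (hcont.norm).eventually (eventually_lt_nhds (by rwa [norm_zero]))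
          exact nhdsWithin_le_nhds this
        obtain ⟨z, hzV, hzs⟩ := (hmemV.and hsmall).exists
        have := (hV hzV).2.2.2.2 (hnearnp z hzV)
        rw [hqg z hzV] at this
        linarith
      -- h is continuous at y
      have htq0 : Filter.Tendsto (fun w => deriv g w / g w) (𝓝 y) (𝓝 (deriv g y / g y)) :=
        ((analyticAt_deriv' hg).continuousAt.div hg.continuousAt hg0)
      have htq : Filter.Tendsto q (𝓝[≠] y) (𝓝 (deriv g y / g y)) :=
        Filter.Tendsto.congr' (hqevg.mono fun z hz => hz.symm)
          (tendsto_nhdsWithin_of_tendsto_nhds htq0)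
      have hnp : y ∉ polesOf q := notPole_of_tendsto htq
      have hby : M ≤ ‖q y‖ := hb.self_of_nhds hnp
      have hcy : ContinuousAt h y := by
        by_contra hnc
        have hd0 : deriv h y = 0 :=
          deriv_zero_of_not_differentiableAt (fun hd => hnc hd.continuousAt)
        have : q y = 0 := by simp [hqdef, hd0]
        rw [this, norm_zero] at hby
        linarith
      have hyg : h y = g y := by
        apply value_eq_of_continuousAt (ψ := g) _ _ hcy
        · filter_upwards [hmemV] with z hz using he_g z hz
        · exact tendsto_nhdsWithin_of_tendsto_nhds hg.continuousAt
      have heqn : h =ᶠ[𝓝 y] g := by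
        apply ev_nhds_of_punctured (p := fun z => h z = g z) _ hyg
        filter_upwards [hmemV] with z hz using he_g z hz
      have hdy : deriv h y = deriv g y := heqn.deriv_eq
      constructor
      · have hueq : (fun z => h z / deriv h z) =ᶠ[𝓝 y] fun z => g z / deriv g z := by
          filter_upwards [heqn, heqn.eventuallyEq_nhds] with z h1 h2
          rw [h1, h2.deriv_eq]
        rw [hueq.differentiableAt_iff]
        exact (hg.differentiableAt).div (analyticAt_deriv' hg).differentiableAt hdgy
      · have hval : h y / deriv h y = (q y)⁻¹ := (inv_div _ _).symm
        rw [hval, norm_inv, one_div]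
        exact inv_anti₀ hM0 hby
    · -- n ≠ 0
      have hdy0 : d y ≠ 0 := by
        have : d y = (n : ℂ) * g y := by simp [hddef]
        rw [this]
        exact mul_ne_zero (Int.cast_ne_zero.mpr hn0) hg0
      have hupunct : ∀ᶠ z in 𝓝[≠] y, h z / deriv h z = (z - y) * g z / d z := by
        filter_upwards [hmemV, self_mem_nhdsWithin] with z hz hzy
        have hsub : z - y ≠ 0 := sub_ne_zero.mpr hzy
        have e1 := (hV hz).1
        have e2 := (hV hz).2.1
        have h3 : (z - y) ^ n * g z = (z - y) ^ (n - 1) * ((z - y) * g z) := by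
          rw [← mul_assoc, ← zpow_add_one₀ hsub, sub_add_cancel]
        rw [e1, e2, h3, mul_div_mul_left _ _ (zpow_ne_zero _ hsub)]
      have huy : h y / deriv h y = 0 := by
        rcases lt_or_gt_of_ne hn0 with hneg | hpos
        · -- n < 0
          by_cases hcy : ContinuousAt h y
          · exfalso
            set j := (-n).toNat with hjdef
            have hjn : ((j : ℤ)) = -n := Int.toNat_of_nonneg (by omega)
            have hjrep : ∀ᶠ z in 𝓝[≠] y, g z = (z - y) ^ j * h z := by
              filter_upwards [hmemV, self_mem_nhdsWithin] with z hz hzy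
              have hsub : z - y ≠ 0 := sub_ne_zero.mpr hzy
              have e1 := (hV hz).1
              rw [e1, ← mul_assoc, ← zpow_natCast (z - y) j, ← zpow_add₀ hsub, hjn,
                neg_add_cancel, zpow_zero, one_mul]
            have ht1 : Filter.Tendsto (fun z => (z - y) ^ j * h z) (𝓝 y) (𝓝 0) := by
              have hc : ContinuousAt (fun z : ℂ => (z - y) ^ j * h z) y :=
                (((continuous_id.sub continuous_const).pow j).continuousAt).mul hcy
              have hval : (fun z : ℂ => (z - y) ^ j * h z) y = 0 := by
                simp [zero_pow (by omega : j ≠ 0)]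
              rw [← hval]
              exact hc
            have ht2 : Filter.Tendsto g (𝓝[≠] y) (𝓝 0) :=
              Filter.Tendsto.congr' (hjrep.mono fun z hz => hz.symm)
                (tendsto_nhdsWithin_of_tendsto_nhds ht1)
            have := tendsto_nhds_unique ht2
              (tendsto_nhdsWithin_of_tendsto_nhds hg.continuousAt)
            exact hg0 this.symm
          · rw [deriv_zero_of_not_differentiableAt (fun hd => hcy hd.continuousAt), div_zero]
        · -- n > 0
          by_cases hcy : ContinuousAt h y
          · have hy0 : h y = 0 := by
              apply value_eq_of_continuousAt (ψ := fun z => (z - y) ^ n.toNat * g z) _ _ hcy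
              · filter_upwards [heq] with z hz
                rw [hz, ← zpow_natCast (z - y) n.toNat, Int.toNat_of_nonneg (by omega)]
              · apply tendsto_nhdsWithin_of_tendsto_nhds
                have hc : ContinuousAt (fun z : ℂ => (z - y) ^ n.toNat * g z) y :=
                  (((continuous_id.sub continuous_const).pow n.toNat).continuousAt).mul
                    hg.continuousAt
                have hval : (fun z : ℂ => (z - y) ^ n.toNat * g z) y = 0 := by
                  simp [zero_pow (by omega : n.toNat ≠ 0)]
                rw [← hval]
                exact hc
            rw [hy0, zero_div]
          · rw [deriv_zero_of_not_differentiableAt (fun hd => hcy hd.continuousAt), div_zero]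
      have hueq : (fun z => h z / deriv h z) =ᶠ[𝓝 y] fun z => (z - y) * g z / d z := by
        apply ev_nhds_of_punctured (p := fun z => h z / deriv h z = (z - y) * g z / d z)
          hupunct
        rw [huy, sub_self, zero_mul, zero_div]
      constructor
      · rw [hueq.differentiableAt_iff]
        exact ((differentiableAt_id.sub (differentiableAt_const _)).mul
          hg.differentiableAt).div hdan.differentiableAt hdy0
      · rw [huy, norm_zero]
        positivity

private lemma coreB {h : ℂ → ℂ} {y : ℂ} (hm : MeromorphicAt h y) {M : ℝ} (hM : 1 ≤ M)
    (hb : ∀ᶠ z in 𝓝 y, z ∉ polesOf (fun w => deriv h w / h w) → M ≤ ‖deriv h z / h z‖) :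
    ∃ᶠ z in 𝓝[≠] y, AnalyticAt ℂ h z ∧ deriv h z ≠ 0 := by
  have hM0 : (0 : ℝ) < M := lt_of_lt_of_le one_pos hM
  set q : ℂ → ℂ := fun w => deriv h w / h w with hqdef
  have haan : ∀ᶠ z in 𝓝[≠] y, AnalyticAt ℂ h z := hm.eventually_analyticAt
  rcases eq_or_ne (meromorphicOrderAt h y) ⊤ with htop | hne
  · exfalso
    have hzero : ∀ᶠ z in 𝓝[≠] y, h z = 0 := meromorphicOrderAt_eq_top_iff.mp htop
    obtain ⟨V, hVo, hyV, hV⟩ :=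
      mem_nhdsWithin.mp (Filter.inter_mem hzero (nhdsWithin_le_nhds hb))
    have hq0 : ∀ w ∈ V ∩ {y}ᶜ, q w = 0 := by
      intro w hw
      have hh0w : h =ᶠ[𝓝 w] fun _ => 0 :=
        eventuallyEq_of_mem ((hVo.inter isOpen_compl_singleton).mem_nhds hw)
          (fun u hu => (hV hu).1)
      simp [hqdef, hh0w.deriv_eq, deriv_const]
    have hVne : ∀ᶠ z in 𝓝[≠] y, z ∈ V ∩ {y}ᶜ := by
      have h1 : ∀ᶠ z in 𝓝[≠] y, z ∈ V := nhdsWithin_le_nhds (hVo.mem_nhds hyV)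
      filter_upwards [h1, self_mem_nhdsWithin] with z h1 h2 using ⟨h1, h2⟩
    obtain ⟨z, hzV⟩ := hVne.exists
    have hnp : z ∉ polesOf q := by
      apply notPole_of_tendsto (c := 0)
      apply Filter.Tendsto.congr' _ tendsto_const_nhds
      exact (eventuallyEq_of_mem
        (nhdsWithin_le_nhds (((hVo.inter isOpen_compl_singleton).mem_nhds hzV)))
        (fun u hu => (hq0 u hu).symm))
    have hcontra := (hV hzV).2 hnp
    rw [show deriv h z / h z = 0 from hq0 z hzV, norm_zero] at hcontra
    linarith
  · obtain ⟨n, hn⟩ := WithTop.ne_top_iff_exists.mp hne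
    obtain ⟨g, hg, hg0, heq0⟩ := (meromorphicOrderAt_eq_int_iff (n := n) hm).mp hn.symm
    have heq : ∀ᶠ z in 𝓝[≠] y, h z = (z - y) ^ n * g z :=
      heq0.mono fun z hz => by simpa [smul_eq_mul] using hz
    have hder := deriv_rep hg heq
    set d : ℂ → ℂ := fun z => (n : ℂ) * g z + (z - y) * deriv g z with hddef
    have hdan : AnalyticAt ℂ d y :=
      (analyticAt_const.mul hg).add ((analyticAt_id.sub analyticAt_const).mul
        (analyticAt_deriv' hg))
    have hgan : ∀ᶠ z in 𝓝[≠] y, AnalyticAt ℂ g z := nhdsWithin_le_nhds hg.eventually_analyticAt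
    have hgne : ∀ᶠ z in 𝓝[≠] y, g z ≠ 0 :=
      nhdsWithin_le_nhds (hg.continuousAt.eventually_ne hg0)
    have hbb : ∀ᶠ z in 𝓝[≠] y, (z ∉ polesOf q → M ≤ ‖q z‖) := nhdsWithin_le_nhds hb
    obtain ⟨V, hVo, hyV, hV⟩ :=
      mem_nhdsWithin.mp (heq.and (hder.and (hgan.and (hgne.and hbb))))
    have hmemV : ∀ᶠ z in 𝓝[≠] y, z ∈ V ∩ {y}ᶜ := by
      have h1 : ∀ᶠ z in 𝓝[≠] y, z ∈ V := nhdsWithin_le_nhds (hVo.mem_nhds hyV)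
      filter_upwards [h1, self_mem_nhdsWithin] with z h1 h2 using ⟨h1, h2⟩
    rcases eq_or_ne n 0 with hn0 | hn0
    · -- n = 0
      have he_g : ∀ z ∈ V ∩ {y}ᶜ, h z = g z := by
        rintro z hz
        have := (hV hz).1
        rwa [hn0, zpow_zero, one_mul] at this
      have hloc : ∀ z ∈ V ∩ {y}ᶜ, h =ᶠ[𝓝 z] g := fun z hz =>
        eventuallyEq_of_mem ((hVo.inter isOpen_compl_singleton).mem_nhds hz) he_g
      rcases (analyticAt_deriv' hg).eventually_eq_zero_or_eventually_ne_zero with hdg0 | hdgne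
      · exfalso
        obtain ⟨W, hWsub, hWo, hyW⟩ := _root_.mem_nhds_iff.mp hdg0
        have hmemW : ∀ᶠ z in 𝓝[≠] y, z ∈ V ∩ W ∩ {y}ᶜ := by
          have h1 : ∀ᶠ z in 𝓝[≠] y, z ∈ V := nhdsWithin_le_nhds (hVo.mem_nhds hyV)
          have h2 : ∀ᶠ z in 𝓝[≠] y, z ∈ W := nhdsWithin_le_nhds (hWo.mem_nhds hyW)
          filter_upwards [h1, h2, self_mem_nhdsWithin] with z h1 h2 h3 using ⟨⟨h1, h2⟩, h3⟩
        have hq0 : ∀ w ∈ V ∩ W ∩ {y}ᶜ, q w = 0 := by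
          rintro w ⟨⟨hwV, hwW⟩, hwy⟩
          have hdw : deriv h w = deriv g w := (hloc w ⟨hwV, hwy⟩).deriv_eq
          have h0 : deriv g w = 0 := hWsub hwW
          show deriv h w / h w = 0
          rw [hdw, h0, zero_div]
        obtain ⟨z, hzV⟩ := hmemW.exists
        have hnp : z ∉ polesOf q := by
          apply notPole_of_tendsto (c := 0)
          apply Filter.Tendsto.congr' _ tendsto_const_nhds
          apply Filter.EventuallyEq.symm
          apply eventuallyEq_of_mem (nhdsWithin_le_nhds
            ((((hVo.inter hWo).inter isOpen_compl_singleton).mem_nhds hzV)))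
          exact fun u hu => hq0 u hu
        have hcontra := (hV ⟨hzV.1.1, hzV.2⟩).2.2.2.2 hnp
        rw [show q z = 0 from hq0 z hzV, norm_zero] at hcontra
        linarith
      · apply Filter.Eventually.frequently
        filter_upwards [haan, hmemV, hdgne] with z hz1 hz2 hz3
        exact ⟨hz1, by rw [(hloc z hz2).deriv_eq]; exact hz3⟩
    · -- n ≠ 0
      have hdy0 : d y ≠ 0 := by
        have : d y = (n : ℂ) * g y := by simp [hddef]
        rw [this]
        exact mul_ne_zero (Int.cast_ne_zero.mpr hn0) hg0
      have hdev : ∀ᶠ z in 𝓝[≠] y, d z ≠ 0 :=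
        nhdsWithin_le_nhds (hdan.continuousAt.eventually_ne hdy0)
      apply Filter.Eventually.frequently
      filter_upwards [haan, hmemV, hdev, self_mem_nhdsWithin] with z hz1 hz2 hz3 hz4
      refine ⟨hz1, ?_⟩
      have hsub : z - y ≠ 0 := sub_ne_zero.mpr hz4
      rw [(hV hz2).2.1]
      exact mul_ne_zero (zpow_ne_zero _ hsub) hz3

private lemma sqrt_one_add_sq_le {x : ℝ} (hx : 0 ≤ x) : Real.sqrt (1 + x ^ 2) ≤ 1 + x := by
  rw [show (1 + x) = Real.sqrt ((1 + x) ^ 2) by rw [Real.sqrt_sq (by linarith)]]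
  exact Real.sqrt_le_sqrt (by nlinarith)

private lemma sph_bound1 {z w : ℂ} {C : ℝ} (hC : 0 ≤ C) (hw : ‖w‖ ≤ C)
    (hd : 2 * ‖z - w‖ / (Real.sqrt (1 + ‖z‖ ^ 2) * Real.sqrt (1 + ‖w‖ ^ 2)) < 1 / (1 + C)) :
    ‖z‖ ≤ 1 + 2 * C := by
  by_contra hzl
  push_neg at hzl
  have s1le : Real.sqrt (1 + ‖z‖ ^ 2) ≤ 1 + ‖z‖ := sqrt_one_add_sq_le (norm_nonneg z)
  have s2le : Real.sqrt (1 + ‖w‖ ^ 2) ≤ 1 + C :=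
    (sqrt_one_add_sq_le (norm_nonneg w)).trans (by linarith)
  have s1pos : 0 < Real.sqrt (1 + ‖z‖ ^ 2) := Real.sqrt_pos.mpr (by positivity)
  have s2pos : 0 < Real.sqrt (1 + ‖w‖ ^ 2) := Real.sqrt_pos.mpr (by positivity)
  have hzw : ‖z‖ - C ≤ ‖z - w‖ := by
    have := norm_sub_norm_le z w
    linarith
  rw [div_lt_div_iff₀ (by positivity) (by positivity)] at hd
  nlinarith [norm_nonneg (z - w), norm_nonneg z]

private lemma sph_bound2 {z : ℂ} {M : ℝ} (hM : 0 ≤ M)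
    (hd : 2 / Real.sqrt (1 + ‖z‖ ^ 2) < 2 / Real.sqrt (1 + M ^ 2)) : M ≤ ‖z‖ := by
  have s1pos : 0 < Real.sqrt (1 + ‖z‖ ^ 2) := Real.sqrt_pos.mpr (by positivity)
  have s2pos : 0 < Real.sqrt (1 + M ^ 2) := Real.sqrt_pos.mpr (by positivity)
  rw [div_lt_div_iff₀ s1pos s2pos] at hd
  have h2 : Real.sqrt (1 + M ^ 2) < Real.sqrt (1 + ‖z‖ ^ 2) := by nlinarith
  have h3 : 1 + M ^ 2 < 1 + ‖z‖ ^ 2 := by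
    have := Real.sqrt_lt_sqrt (by positivity) h2
    nlinarith [Real.sq_sqrt (show (0:ℝ) ≤ 1 + M ^ 2 by positivity),
      Real.sq_sqrt (show (0:ℝ) ≤ 1 + ‖z‖ ^ 2 by positivity)]
  nlinarith [norm_nonneg z]

private lemma sphLocUnif_compact {fseq : ℕ → ℂ → OnePoint ℂ} {g : ℂ → OnePoint ℂ} {U : Set ℂ}
    (h : SphLocUnifOn fseq g U) {ε : ℝ} (hε : 0 < ε) {K : Set ℂ} (hK : IsCompact K)
    (hKU : K ⊆ U) : ∀ᶠ n in atTop, ∀ y ∈ K, sphDist (fseq n y) (g y) < ε := by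
  have h' : ∀ x, x ∈ K → ∃ t ∈ 𝓝[U] x, ∀ᶠ n in atTop, ∀ y ∈ t, sphDist (fseq n y) (g y) < ε :=
    fun x hx => h ε hε x (hKU hx)
  choose! t htmem hev using h'
  have h'' : ∀ x, x ∈ K → ∃ V : Set ℂ, IsOpen V ∧ x ∈ V ∧ V ∩ U ⊆ t x :=
    fun x hx => mem_nhdsWithin.mp (htmem x hx)
  choose! V hVo hxV hVsub using h''
  obtain ⟨s, hsK, hcov⟩ := hK.elim_nhds_subcover V (fun x hx => (hVo x hx).mem_nhds (hxV x hx))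
  have hall : ∀ᶠ n in atTop, ∀ x ∈ s, ∀ y ∈ t x, sphDist (fseq n y) (g y) < ε :=
    (eventually_all_finset s).mpr (fun x hx => hev x (hsK x hx))
  filter_upwards [hall] with n hn y hy
  obtain ⟨x, hxs, hyV⟩ := Set.mem_iUnion₂.mp (hcov hy)
  exact hn x hxs y (hVsub x (hsK x hxs) ⟨hyV, hKU hy⟩)


private lemma meromorphicAt_deriv {h : ℂ → ℂ} {x : ℂ} (hm : MeromorphicAt h x) :
    MeromorphicAt (deriv h) x := by
  rcases MeromorphicAt.iff_eventuallyEq_zpow_smul_analyticAt.mp hm with ⟨n, g, hg, heq⟩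
  rw [MeromorphicAt.iff_eventuallyEq_zpow_smul_analyticAt]
  refine ⟨n - 1, fun z => (n : ℂ) * g z + (z - x) * deriv g z,
    ((analyticAt_const.mul hg).add ((analyticAt_id.sub analyticAt_const).mul
      (analyticAt_deriv' hg))), ?_⟩
  have := deriv_rep hg (heq.mono fun z hz => by simpa [smul_eq_mul] using hz)
  exact this.mono fun z hz => by simpa [smul_eq_mul] using hz

private lemma merom_iteratedDeriv {f : ℂ → ℂ} {x : ℂ} (hm : MeromorphicAt f x) (j : ℕ) :
    MeromorphicAt (iteratedDeriv j f) x := by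
  induction j with
  | zero => simpa [iteratedDeriv_zero] using hm
  | succ k ih => rw [iteratedDeriv_succ]; exact meromorphicAt_deriv ih


/-- **Lemma (no subsequence of the lifted logarithmic derivatives converges to `∞`).**
If `D ⊆ ℂ` is a domain, `m ≥ 1`, the `fₙ` are meromorphic on `D`, and
`fₙ^{(m+1)}/fₙ^{(m)}` converges locally uniformly (spherically) on `D` to `F_m` meromorphic
on `D`, then no subsequence of `(fₙ^{(m)}/fₙ^{(m-1)})ₙ` converges locally uniformly to the
constant `∞` on `D \ P_{F_m}`. -/
theorem lifted_log_derivatives_not_to_infty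
    (D : Set ℂ) (hDopen : IsOpen D) (hDconn : IsConnected D)
    (m : ℕ) (hm : 1 ≤ m)
    (f : ℕ → ℂ → ℂ) (hf : ∀ n, MeromorphicOn (f n) D)
    (Fm : ℂ → ℂ) (hFm : MeromorphicOn Fm D)
    (hconv : SphLocUnifOn (fun n => toSphere (derivQuot m (f n))) (toSphere Fm) D) :
    ∀ φ : ℕ → ℕ, StrictMono φ →
      ¬ SphLocUnifOn (fun k => toSphere (derivQuot (m - 1) (f (φ k))))
        (fun _ => OnePoint.infty) (D \ polesOf Fm) := by
  intro φ hφ hbad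
  obtain ⟨z, hzD⟩ := hDconn.nonempty
  have hev1 : ∀ᶠ w in 𝓝[≠] z, AnalyticAt ℂ Fm w ∧ w ∈ D :=
    (hFm z hzD).eventually_analyticAt.and (nhdsWithin_le_nhds (hDopen.mem_nhds hzD))
  obtain ⟨z0, hFa, hz0D⟩ := hev1.exists
  set C : ℝ := ‖Fm z0‖ + 1 with hCdef
  have hC1 : 1 ≤ C := by have := norm_nonneg (Fm z0); simp only [hCdef]; linarith
  have hC0 : 0 ≤ C := by linarith
  have hev2 : ∀ᶠ w in 𝓝 z0, AnalyticAt ℂ Fm w ∧ w ∈ D ∧ ‖Fm w‖ ≤ C := by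
    have h1 : ∀ᶠ w in 𝓝 z0, AnalyticAt ℂ Fm w := hFa.eventually_analyticAt
    have h2 : ∀ᶠ w in 𝓝 z0, w ∈ D := hDopen.mem_nhds hz0D
    have h3 : ∀ᶠ w in 𝓝 z0, ‖Fm w‖ ≤ C :=
      hFa.continuousAt.norm.eventually (eventually_le_nhds (lt_add_one ‖Fm z0‖))
    filter_upwards [h1, h2, h3] with w hw1 hw2 hw3 using ⟨hw1, hw2, hw3⟩
  obtain ⟨δ0, hδ0pos, hball0⟩ := Metric.eventually_nhds_iff_ball.mp hev2
  have hnopole : ∀ y ∈ ball z0 δ0, y ∉ polesOf Fm := fun y hy =>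
    notPole_of_tendsto (tendsto_nhdsWithin_of_tendsto_nhds (hball0 y hy).1.continuousAt)
  -- instantiate hconv at z0 with ε₁ = 1/(1+C)
  have hε₁pos : (0:ℝ) < 1/(1+C) := by positivity
  obtain ⟨t₁, ht₁mem, ht₁⟩ := hconv (1/(1+C)) hε₁pos z0 hz0D
  obtain ⟨V₁, hV₁o, hz0V₁, hV₁sub⟩ := mem_nhdsWithin.mp ht₁mem
  obtain ⟨δ₁, hδ₁pos, hδ₁sub⟩ := Metric.isOpen_iff.mp hV₁o z0 hz0V₁
  set δ : ℝ := min δ0 δ₁ with hδdef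
  have hδpos : 0 < δ := lt_min hδ0pos hδ₁pos
  have hδ0' : ball z0 δ ⊆ ball z0 δ0 := ball_subset_ball (min_le_left _ _)
  have hδ1' : ball z0 δ ⊆ V₁ := fun y hy => hδ₁sub (ball_subset_ball (min_le_right _ _) hy)
  have hballt₁ : ball z0 δ ⊆ t₁ := fun y hy =>
    hV₁sub ⟨hδ1' hy, (hball0 y (hδ0' hy)).2.1⟩
  -- constants
  set C' : ℝ := 1 + 2*C with hC'def
  set M : ℝ := max (2*C') (32/δ) with hMdef
  have hC'1 : 1 ≤ C' := by simp only [hC'def]; linarith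
  have hM1 : 1 ≤ M := le_trans (by linarith) (le_max_left (2*C') (32/δ))
  have hM0 : (0:ℝ) < M := by linarith
  have hMC' : 2*C' ≤ M := le_max_left _ _
  have hMδ : 32/δ ≤ M := le_max_right _ _
  have hε₂pos : (0:ℝ) < 2/Real.sqrt (1+M^2) := by positivity
  -- compact set K
  set K : Set ℂ := closedBall z0 (δ/2) with hKdef
  have hKball : K ⊆ ball z0 δ := closedBall_subset_ball (by linarith)
  have hKU : K ⊆ D \ polesOf Fm := fun y hy =>
    ⟨(hball0 y (hδ0' (hKball hy))).2.1, hnopole y (hδ0' (hKball hy))⟩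
  have key2 := sphLocUnif_compact hbad hε₂pos (isCompact_closedBall z0 (δ/2)) hKU
  have key1 : ∀ᶠ n in atTop, ∀ y ∈ ball z0 δ,
      sphDist (toSphere (derivQuot m (f n)) y) (toSphere Fm y) < 1/(1+C) :=
    ht₁.mono (fun n hn y hy => hn y (hballt₁ hy))
  obtain ⟨N1, hN1⟩ := eventually_atTop.mp key1
  obtain ⟨N2, hN2⟩ := eventually_atTop.mp key2
  have hk2 := hN2 (max N1 N2) (le_max_right _ _)
  have hk1 := hN1 (φ (max N1 N2)) (le_trans (le_max_left _ _) hφ.le_apply)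
  set F : ℂ → ℂ := f (φ (max N1 N2)) with hFdef
  set h : ℂ → ℂ := iteratedDeriv (m-1) F with hhdef
  have hm1 : m - 1 + 1 = m := Nat.succ_pred_eq_of_pos hm
  have e0 : iteratedDeriv m F = deriv h := by
    conv_lhs => rw [show m = m - 1 + 1 from hm1.symm]
    rw [iteratedDeriv_succ]
  have e1 : iteratedDeriv (m+1) F = deriv (deriv h) := by
    rw [iteratedDeriv_succ, e0]
  have hq_eq : derivQuot (m-1) F = fun w => deriv h w / h w := by
    funext w
    show iteratedDeriv (m-1+1) F w / iteratedDeriv (m-1) F w = _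
    rw [hm1, e0]
  have hQ_eq : derivQuot m F = fun w => deriv (deriv h) w / deriv h w := by
    funext w
    show iteratedDeriv (m+1) F w / iteratedDeriv m F w = _
    rw [e1, e0]
  -- bounds
  have hQbound : ∀ y ∈ ball z0 δ, y ∉ polesOf (derivQuot m F) → ‖derivQuot m F y‖ ≤ C' := by
    intro y hy hnp
    have hb := hk1 y hy
    simp only [toSphere] at hb
    rw [if_neg hnp, if_neg (hnopole y (hδ0' hy))] at hb
    exact sph_bound1 hC0 (hball0 y (hδ0' hy)).2.2 hb
  have hqbound : ∀ y ∈ K, y ∉ polesOf (derivQuot (m-1) F) → M ≤ ‖derivQuot (m-1) F y‖ := by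
    intro y hy hnp
    have hb := hk2 y hy
    simp only [toSphere] at hb
    rw [if_neg hnp] at hb
    exact sph_bound2 (by linarith) hb
  have hmero : ∀ y ∈ ball z0 δ, MeromorphicAt h y := fun y hy =>
    merom_iteratedDeriv (hf (φ (max N1 N2)) y (hball0 y (hδ0' hy)).2.1) (m-1)
  have hbAt : ∀ y ∈ ball z0 (δ/2), ∀ᶠ w in 𝓝 y,
      w ∉ polesOf (fun w => deriv h w / h w) → M ≤ ‖deriv h w / h w‖ := by
    intro y hy
    have hb2 : ball z0 (δ/2) ∈ 𝓝 y := isOpen_ball.mem_nhds hy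
    filter_upwards [hb2] with w hw hnp
    have h1 := hqbound w (ball_subset_closedBall hw) (by rw [hq_eq]; exact hnp)
    rwa [hq_eq] at h1
  have hhalfball : ball z0 (δ/2) ⊆ ball z0 δ := ball_subset_ball (by linarith)
  have hu : ∀ y ∈ ball z0 (δ/2),
      DifferentiableAt ℂ (fun w => h w / deriv h w) y ∧ ‖h y / deriv h y‖ ≤ 1/M :=
    fun y hy => coreA (hmero y (hhalfball hy)) hM1 (hbAt y hy)
  -- pick z1
  have hz0half : z0 ∈ ball z0 (δ/2) := mem_ball_self (by positivity)
  have hfreq := coreB (hmero z0 (hhalfball hz0half)) hM1 (hbAt z0 hz0half)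
  have hball4 : ∀ᶠ w in 𝓝[≠] z0, w ∈ ball z0 (δ/4) :=
    nhdsWithin_le_nhds (isOpen_ball.mem_nhds (mem_ball_self (by positivity)))
  obtain ⟨z1, ⟨hz1a, hz1d⟩, hz1b⟩ := (hfreq.and_eventually hball4).exists
  have hz1half : z1 ∈ ball z0 (δ/2) := ball_subset_ball (by linarith) hz1b
  have hHan : AnalyticAt ℂ (deriv h) z1 := analyticAt_deriv' hz1a
  have hz1np : z1 ∉ polesOf (derivQuot m F) := by
    rw [hQ_eq]
    exact notPole_of_tendsto (c := deriv (deriv h) z1 / deriv h z1)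
      (tendsto_nhdsWithin_of_tendsto_nhds
        ((analyticAt_deriv' hHan).continuousAt.div hHan.continuousAt hz1d))
  have hQz1 : ‖deriv (deriv h) z1 / deriv h z1‖ ≤ C' := by
    have h1 := hQbound z1 (ball_subset_ball (by linarith) hz1b) hz1np
    rwa [hQ_eq] at h1
  have hudiv : deriv (fun w => h w / deriv h w) z1
      = 1 - (h z1 / deriv h z1) * (deriv (deriv h) z1 / deriv h z1) := by
    rw [show (fun w => h w / deriv h w) = h / deriv h from rfl, deriv_div hz1a.differentiableAt hHan.differentiableAt hz1d, pow_two, sub_div,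
      div_self (mul_ne_zero hz1d hz1d), div_mul_div_comm]
  have hu1 : ‖h z1 / deriv h z1‖ ≤ 1/M := (hu z1 hz1half).2
  have lower : (1:ℝ)/2 ≤ ‖deriv (fun w => h w / deriv h w) z1‖ := by
    rw [hudiv]
    have h1 : ‖(h z1 / deriv h z1) * (deriv (deriv h) z1 / deriv h z1)‖ ≤ (1/M) * C' := by
      rw [norm_mul]
      exact mul_le_mul hu1 hQz1 (norm_nonneg _) (by positivity)
    have h2 : (1/M) * C' ≤ 1/2 := by
      rw [div_mul_eq_mul_div, one_mul, div_le_div_iff₀ hM0 (by norm_num)]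
      linarith
    have h3 := norm_sub_norm_le (1:ℂ)
      ((h z1 / deriv h z1) * (deriv (deriv h) z1 / deriv h z1))
    rw [norm_one] at h3
    linarith
  have hsubball : closedBall z1 (δ/8) ⊆ ball z0 (δ/2) := by
    intro w hw
    have h1 : dist w z1 ≤ δ/8 := mem_closedBall.mp hw
    have h2 : dist z1 z0 < δ/4 := mem_ball.mp hz1b
    rw [mem_ball]
    calc dist w z0 ≤ dist w z1 + dist z1 z0 := dist_triangle _ _ _
      _ < δ/2 := by linarith
  have hdc : DiffContOnCl ℂ (fun w => h w / deriv h w) (ball z1 (δ/8)) := by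
    apply DifferentiableOn.diffContOnCl
    rw [closure_ball z1 (by positivity : δ/8 ≠ 0)]
    exact fun w hw => ((hu w (hsubball hw)).1).differentiableWithinAt
  have upper := Complex.norm_deriv_le_of_forall_mem_sphere_norm_le
    (by positivity : (0:ℝ) < δ/8) hdc
    (fun w hw => (hu w (hsubball (sphere_subset_closedBall hw))).2)
  have hMδ' : 32 ≤ M * δ := by
    rw [div_le_iff₀ hδpos] at hMδ
    linarith
  have hMδpos : (0:ℝ) < M * δ := by positivity
  have hupper2 : (1/M)/(δ/8) ≤ 1/4 := by
    have hEq : (1/M)/(δ/8) = 8/(M*δ) := by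
      field_simp
    rw [hEq, div_le_div_iff₀ hMδpos (by norm_num)]
    linarith
  linarith


end
end

section
/- Let D ⊆ ℂ be a domain, z_0 ∈ D, and p ∈ ℕ. Suppose (f_n)_n is a sequence of meromorphic functions on D that converges locally uniformly on D \ {z_0} to a function F that is holomorphic on D \ {z_0}, and suppose each f_n has at most p poles in D counted with multiplicity. Then F does not have an essential singularity at z_0; that is, F extends meromorphically to z_0. -/
open Filter Topology
open scoped Classical

noncomputable section

open Filter Topology

-- Lemma E: analytic representative when order ≥ 0
lemma MeromorphicAt.exists_analytic_rep {f : ℂ → ℂ} {x : ℂ} (hf : MeromorphicAt f x)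
    (h : (0 : WithTop ℤ) ≤ meromorphicOrderAt f x) :
    ∃ ψ : ℂ → ℂ, AnalyticAt ℂ ψ x ∧ ∀ᶠ z in 𝓝[≠] x, f z = ψ z := by
  rcases eq_or_ne (meromorphicOrderAt f x) ⊤ with ht | ht
  · exact ⟨0, analyticAt_const, by simpa using meromorphicOrderAt_eq_top_iff.mp ht⟩
  · obtain ⟨m, hm⟩ := WithTop.ne_top_iff_exists.mp ht
    have hm0 : (0 : ℤ) ≤ m := by
      rw [← hm] at h
      exact_mod_cast h
    obtain ⟨g, hg, hgne, hfg⟩ := (meromorphicOrderAt_eq_int_iff hf).mp hm.symm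
    refine ⟨fun z => (z - x) ^ m.toNat * g z, ?_, ?_⟩
    · exact (((analyticAt_id.sub analyticAt_const).pow _).mul hg)
    · filter_upwards [hfg] with z hz
      rw [hz, smul_eq_mul, ← zpow_natCast, Int.toNat_of_nonneg hm0]

-- Lemma B: negative order means pole
lemma MeromorphicAt.tendsto_atTop_of_order_neg {f : ℂ → ℂ} {x : ℂ} (hf : MeromorphicAt f x)
    (h : meromorphicOrderAt f x < 0) : Tendsto (fun w => ‖f w‖) (𝓝[≠] x) atTop := by
  have ht : meromorphicOrderAt f x ≠ ⊤ := ne_top_of_lt h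
  obtain ⟨m, hm⟩ := WithTop.ne_top_iff_exists.mp ht
  have hm0 : m < 0 := by rw [← hm] at h; exact_mod_cast h
  obtain ⟨g, hg, hgne, hfg⟩ := (meromorphicOrderAt_eq_int_iff hf).mp hm.symm
  have h1 : Tendsto (fun z => ‖z - x‖) (𝓝[≠] x) (𝓝[>] 0) := by
    apply tendsto_nhdsWithin_of_tendsto_nhds_of_eventually_within
    · have : Tendsto (fun z : ℂ => z - x) (𝓝 x) (𝓝 (x - x)) :=
        (continuous_id.sub continuous_const).continuousAt
      simpa using this.norm.mono_left nhdsWithin_le_nhds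
    · filter_upwards [self_mem_nhdsWithin] with z hz
      simpa [Set.mem_Ioi] using norm_pos_iff.mpr (sub_ne_zero.mpr hz)
  have h2 : Tendsto (fun z => ‖z - x‖ ^ m) (𝓝[≠] x) atTop := by
    have hk : Tendsto (fun t : ℝ => (t ^ (-m).toNat)⁻¹) (𝓝[>] 0) atTop := by
      apply tendsto_inv_nhdsGT_zero.comp
      apply tendsto_nhdsWithin_of_tendsto_nhds_of_eventually_within
      · have := (continuous_pow (M := ℝ) (-m).toNat).continuousAt (x := (0:ℝ))
        simp only [ContinuousAt] at this
        rw [zero_pow (by omega : (-m).toNat ≠ 0)] at this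
        exact this.mono_left nhdsWithin_le_nhds
      · filter_upwards [self_mem_nhdsWithin] with t ht
        exact pow_pos (Set.mem_Ioi.mp ht) _
    have := hk.comp h1
    refine this.congr' ?_
    filter_upwards [self_mem_nhdsWithin] with z hz
    have hz0 : ‖z - x‖ ≠ 0 := norm_ne_zero_iff.mpr (sub_ne_zero.mpr hz)
    simp only [Function.comp_apply]
    rw [← zpow_natCast, ← zpow_neg, Int.toNat_of_nonneg (by omega : (0:ℤ) ≤ -m), neg_neg]
  have h3 : Tendsto (fun z => ‖g z‖) (𝓝[≠] x) (𝓝 ‖g x‖) :=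
    (hg.continuousAt.norm.mono_left nhdsWithin_le_nhds)
  have := h2.atTop_mul_pos (norm_pos_iff.mpr hgne) h3
  refine this.congr' ?_
  filter_upwards [hfg] with z hz
  rw [hz, smul_eq_mul, norm_mul, norm_zpow]

lemma sphDist_coe_coe (u w : ℂ) : sphDist (u : OnePoint ℂ) (w : OnePoint ℂ) =
    2 * ‖u - w‖ / (Real.sqrt (1 + ‖u‖ ^ 2) * Real.sqrt (1 + ‖w‖ ^ 2)) := rfl

lemma sphDist_infty_coe (w : ℂ) : sphDist OnePoint.infty (w : OnePoint ℂ) =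
    2 / Real.sqrt (1 + ‖w‖ ^ 2) := rfl

lemma toSphere_eq_some {f : ℂ → ℂ} {z u : ℂ} (h : toSphere f z = (u : OnePoint ℂ)) :
    z ∉ polesOf f ∧ f z = u := by
  by_cases hz : z ∈ polesOf f
  · rw [toSphere, if_pos hz] at h
    exact absurd h (OnePoint.infty_ne_coe u)
  · rw [toSphere, if_neg hz] at h
    exact ⟨hz, OnePoint.coe_eq_coe.mp h⟩

/-- Lemma A: if the spherical distance from `x` to a point `w` with `‖w‖ ≤ M` is less than
`2 / (√(1+(M+1)²) √(1+M²))`, then `x` is finite and within distance 1 of `w`. -/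
lemma sphDist_lt_imp {M : ℝ} (hM : 0 ≤ M) (x : OnePoint ℂ) {w : ℂ} (hw : ‖w‖ ≤ M)
    (h : sphDist x w < 2 / (Real.sqrt (1 + (M+1) ^ 2) * Real.sqrt (1 + M ^ 2))) :
    ∃ u : ℂ, x = (u : OnePoint ℂ) ∧ ‖u - w‖ < 1 := by
  have hw0 : (0:ℝ) ≤ ‖w‖ := norm_nonneg w
  have s1pos : (0:ℝ) < Real.sqrt (1 + M ^ 2) := Real.sqrt_pos.mpr (by positivity)
  have s2pos : (0:ℝ) < Real.sqrt (1 + (M+1) ^ 2) := Real.sqrt_pos.mpr (by positivity)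
  have s1ge : (1:ℝ) ≤ Real.sqrt (1 + M ^ 2) := by
    have := Real.sqrt_le_sqrt (show (1:ℝ) ≤ 1 + M ^ 2 by nlinarith)
    rwa [Real.sqrt_one] at this
  have s2ge : (1:ℝ) ≤ Real.sqrt (1 + (M+1) ^ 2) := by
    have := Real.sqrt_le_sqrt (show (1:ℝ) ≤ 1 + (M+1) ^ 2 by nlinarith)
    rwa [Real.sqrt_one] at this
  have bw : Real.sqrt (1 + ‖w‖ ^ 2) ≤ Real.sqrt (1 + M ^ 2) :=
    Real.sqrt_le_sqrt (by nlinarith)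
  have bwpos : (0:ℝ) < Real.sqrt (1 + ‖w‖ ^ 2) := Real.sqrt_pos.mpr (by positivity)
  match x with
  | OnePoint.infty =>
    exfalso
    rw [sphDist_infty_coe] at h
    have : 2 / (Real.sqrt (1 + (M+1) ^ 2) * Real.sqrt (1 + M ^ 2))
        ≤ 2 / Real.sqrt (1 + ‖w‖ ^ 2) := by
      apply div_le_div_of_nonneg_left (by norm_num) bwpos
      nlinarith
    linarith
  | (u : ℂ) =>
    refine ⟨u, rfl, ?_⟩
    by_contra hd
    push_neg at hd
    rw [sphDist_coe_coe] at h
    set t := ‖u‖ with htdef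
    set d := ‖u - w‖ with hddef
    have ht0 : 0 ≤ t := norm_nonneg u
    have hd0 : (1:ℝ) ≤ d := hd
    have htd : t ≤ d + M := by
      calc t = ‖(u - w) + w‖ := by rw [htdef]; ring_nf
      _ ≤ d + ‖w‖ := norm_add_le _ _
      _ ≤ d + M := by linarith
    have hapos : (0:ℝ) < Real.sqrt (1 + t ^ 2) := Real.sqrt_pos.mpr (by positivity)
    -- key: √(1+t²) ≤ d √(1+(M+1)²)
    have key : Real.sqrt (1 + t ^ 2) ≤ d * Real.sqrt (1 + (M+1) ^ 2) := by
      have h2 : 1 + t ^ 2 ≤ d ^ 2 * (1 + (M+1) ^ 2) := by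
        rcases le_or_gt t (M + 1) with hc | hc
        · have h1 : t ^ 2 ≤ (M+1) ^ 2 := by nlinarith
          have h2 : (1:ℝ) ≤ d ^ 2 := by nlinarith
          nlinarith [mul_nonneg (sub_nonneg.2 h2) (show (0:ℝ) ≤ 1 + (M+1)^2 by positivity)]
        · nlinarith [sq_nonneg (d - (t - M)), sq_nonneg (t - M - 1), sq_nonneg (d - 1)]
      calc Real.sqrt (1 + t ^ 2) ≤ Real.sqrt (d ^ 2 * (1 + (M+1) ^ 2)) := Real.sqrt_le_sqrt h2
      _ = d * Real.sqrt (1 + (M+1) ^ 2) := by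
          rw [Real.sqrt_mul (by positivity), Real.sqrt_sq (by linarith)]
    have hfin : 2 / (Real.sqrt (1 + (M+1) ^ 2) * Real.sqrt (1 + M ^ 2))
        ≤ 2 * d / (Real.sqrt (1 + t ^ 2) * Real.sqrt (1 + ‖w‖ ^ 2)) := by
      rw [div_le_div_iff₀ (by positivity) (by positivity)]
      have hm := mul_le_mul key bw (le_of_lt bwpos) (by positivity)
      nlinarith
    linarith

/-- Lemma D: locally uniform convergence gives uniform convergence on compact subsets. -/
lemma SphLocUnifOn.uniform_on_compact {fs : ℕ → ℂ → OnePoint ℂ} {g : ℂ → OnePoint ℂ}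
    {U K : Set ℂ} (h : SphLocUnifOn fs g U) (hK : IsCompact K) (hKU : K ⊆ U)
    {ε : ℝ} (hε : 0 < ε) :
    ∀ᶠ n in Filter.atTop, ∀ y ∈ K, sphDist (fs n y) (g y) < ε := by
  have hx : ∀ x : K, ∃ V : Set ℂ, IsOpen V ∧ (x : ℂ) ∈ V ∧
      ∀ᶠ n in Filter.atTop, ∀ y ∈ V ∩ U, sphDist (fs n y) (g y) < ε := by
    rintro ⟨x, hxK⟩
    obtain ⟨t, htm, hev⟩ := h ε hε x (hKU hxK)
    rw [mem_nhdsWithin] at htm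
    obtain ⟨V, hVopen, hxV, hVt⟩ := htm
    exact ⟨V, hVopen, hxV, hev.mono fun n hn y hy => hn y (hVt hy)⟩
  choose V hVopen hxV hVev using hx
  obtain ⟨s, hs⟩ := hK.elim_finite_subcover V hVopen
    (fun x hxK => Set.mem_iUnion.mpr ⟨⟨x, hxK⟩, hxV _⟩)
  have : ∀ᶠ n in Filter.atTop, ∀ i ∈ s, ∀ y ∈ V i ∩ U, sphDist (fs n y) (g y) < ε :=
    (Filter.eventually_all_finset s).mpr fun i _ => hVev i
  filter_upwards [this] with n hn y hy
  obtain ⟨i, his, hyV⟩ := Set.mem_iUnion₂.mp (hs hy)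
  exact hn i his y ⟨hyV, hKU hy⟩

/-- Final step: a polynomial growth bound near `z₀` plus differentiability on a punctured
neighborhood gives meromorphy at `z₀`. -/
lemma meromorphicAt_of_bound {F : ℂ → ℂ} {z₀ : ℂ} {p : ℕ}
    (hd : ∀ᶠ z in 𝓝[≠] z₀, DifferentiableAt ℂ F z)
    {C r₁ : ℝ} (hr₁ : 0 < r₁)
    (hb : ∀ w, w ≠ z₀ → ‖w - z₀‖ < r₁ → ‖F w‖ ≤ C / ‖w - z₀‖ ^ p) :
    MeromorphicAt F z₀ := by
  set C' := max C 0 with hC'def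
  set G := fun z : ℂ => (z - z₀) ^ (p + 1) * F z with hGdef
  have hev : ∀ᶠ z in 𝓝[≠] z₀, ‖G z‖ ≤ C' * ‖z - z₀‖ := by
    have hball : ∀ᶠ z in 𝓝 z₀, ‖z - z₀‖ < r₁ := by
      filter_upwards [Metric.ball_mem_nhds z₀ hr₁] with z hz
      rwa [Metric.mem_ball, dist_eq_norm] at hz
    filter_upwards [hball.filter_mono nhdsWithin_le_nhds, self_mem_nhdsWithin] with z hz hz'
    have hzne : z ≠ z₀ := hz'
    have hnz : (0:ℝ) < ‖z - z₀‖ := norm_pos_iff.mpr (sub_ne_zero.mpr hzne)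
    have h1 : ‖F z‖ ≤ C' / ‖z - z₀‖ ^ p :=
      le_trans (hb z hzne hz) (by gcongr; exact le_max_left _ _)
    calc ‖G z‖ = ‖z - z₀‖ ^ (p+1) * ‖F z‖ := by rw [hGdef]; simp [norm_mul, norm_pow]
    _ ≤ ‖z - z₀‖ ^ (p+1) * (C' / ‖z - z₀‖ ^ p) := by
        apply mul_le_mul_of_nonneg_left h1 (by positivity)
    _ = C' * ‖z - z₀‖ := by
        rw [pow_succ, mul_comm (‖z - z₀‖ ^ p) (‖z - z₀‖), mul_assoc, div_eq_mul_inv,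
          mul_comm C' (‖z - z₀‖ ^ p)⁻¹, ← mul_assoc (‖z - z₀‖ ^ p), mul_inv_cancel₀ (by positivity),
          one_mul, mul_comm]
  have hG0 : Filter.Tendsto G (𝓝[≠] z₀) (𝓝 0) := by
    apply squeeze_zero_norm' hev
    have : Filter.Tendsto (fun z : ℂ => C' * ‖z - z₀‖) (𝓝 z₀) (𝓝 (C' * ‖z₀ - z₀‖)) :=
      (continuous_const.mul ((continuous_id.sub continuous_const).norm)).continuousAt
    simpa using this.mono_left nhdsWithin_le_nhds
  have hGz₀ : G z₀ = 0 := by simp [hGdef]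
  have hGc : ContinuousAt G z₀ := by
    rw [ContinuousAt, hGz₀, ← nhdsNE_sup_pure]
    refine Filter.tendsto_sup.mpr ⟨hG0, ?_⟩
    exact tendsto_pure_left.mpr fun s hs => hGz₀ ▸ mem_of_mem_nhds hs
  have hGd : ∀ᶠ z in 𝓝[≠] z₀, DifferentiableAt ℂ G z := by
    filter_upwards [hd] with z hz
    exact ((differentiableAt_id.sub (differentiableAt_const _)).pow _).mul hz
  have hA := Complex.analyticAt_of_differentiable_on_punctured_nhds_of_continuousAt hGd hGc
  exact ⟨p + 1, by simpa only [smul_eq_mul] using hA⟩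

/-- The threshold for the spherical distance used in `sphDist_lt_imp`. -/
def epsFor (M : ℝ) : ℝ := 2 / (Real.sqrt (1 + (M+1) ^ 2) * Real.sqrt (1 + M ^ 2))

lemma epsFor_pos (M : ℝ) : 0 < epsFor M := by
  have s1 : (0:ℝ) < Real.sqrt (1 + M ^ 2) := Real.sqrt_pos.mpr (by positivity)
  have s2 : (0:ℝ) < Real.sqrt (1 + (M+1) ^ 2) := Real.sqrt_pos.mpr (by positivity)
  exact div_pos (by norm_num) (by positivity)

/-- Key quantitative bound: `F` grows at most like `‖w - z₀‖⁻ᵖ` near `z₀`. -/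
lemma key_bound
    (D : Set ℂ) (hDopen : IsOpen D)
    (z₀ : ℂ) (hz₀ : z₀ ∈ D) (p : ℕ)
    (f : ℕ → ℂ → ℂ) (hf : ∀ n, MeromorphicOn (f n) D)
    (F : ℂ → ℂ) (hF : DifferentiableOn ℂ F (D \ {z₀}))
    (hconv : SphLocUnifOn (fun n => toSphere (f n)) (fun z => (F z : OnePoint ℂ))
      (D \ {z₀}))
    (hpoles : ∀ n, ∃ a : Fin p → ℂ, ∀ z ∈ D,
      ∃ h : MeromorphicAt (fun w => (∏ j, (w - a j)) * f n w) z,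
        (0 : WithTop ℤ) ≤ meromorphicOrderAt (fun w => (∏ j, (w - a j)) * f n w) z) :
    ∃ C : ℝ, 0 < C ∧ ∃ r₁ : ℝ, 0 < r₁ ∧
      ∀ w, w ≠ z₀ → ‖w - z₀‖ < r₁ → ‖F w‖ ≤ C / ‖w - z₀‖ ^ p := by
  have hFcont : ContinuousOn F (D \ {z₀}) := hF.continuousOn
  -- choose a radius R ≤ 1 with closedBall z₀ R ⊆ D
  obtain ⟨ε₀, hε₀, hball⟩ := Metric.isOpen_iff.mp hDopen z₀ hz₀
  set R : ℝ := min (ε₀/2) 1 with hRdef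
  have hR0 : 0 < R := lt_min (by linarith) one_pos
  have hR1 : R ≤ 1 := min_le_right _ _
  have hRD : Metric.closedBall z₀ R ⊆ D := by
    intro x hx
    apply hball
    rw [Metric.mem_closedBall] at hx
    rw [Metric.mem_ball]
    calc dist x z₀ ≤ R := hx
    _ ≤ ε₀/2 := min_le_left _ _
    _ < ε₀ := by linarith
  set r : ℝ := R/2 with hrdef
  have hr0 : 0 < r := by positivity
  -- the fixed compact annulus and the bound M₀ for F on it
  set K₀ : Set ℂ := Metric.closedBall z₀ R \ Metric.ball z₀ (r/2) with hK₀def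
  have hK₀sub : K₀ ⊆ D \ {z₀} := by
    rintro x ⟨hx1, hx2⟩
    refine ⟨hRD hx1, ?_⟩
    simp only [Set.mem_singleton_iff]
    intro hxz
    apply hx2
    rw [hxz]
    exact Metric.mem_ball_self (by positivity)
  have hK₀cpt : IsCompact K₀ := (isCompact_closedBall z₀ R).diff Metric.isOpen_ball
  obtain ⟨M₀', hM₀'⟩ := hK₀cpt.exists_bound_of_continuousOn (hFcont.mono hK₀sub)
  set M₀ : ℝ := max M₀' 0 with hM₀def
  have hM₀0 : 0 ≤ M₀ := le_max_right _ _
  have hM₀b : ∀ y ∈ K₀, ‖F y‖ ≤ M₀ := fun y hy => le_trans (hM₀' y hy) (le_max_left _ _)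
  set Bd : ℝ := 2 ^ p * (M₀ + 1) with hBddef
  have hBd0 : 0 < Bd := by positivity
  refine ⟨Bd * 4 ^ p + 1, by positivity, r/2, by positivity, ?_⟩
  intro w hw hwr
  set ρ : ℝ := ‖w - z₀‖ with hρdef
  have hρ0 : 0 < ρ := norm_pos_iff.mpr (sub_ne_zero.mpr hw)
  have hρr : ρ < r/2 := hwr
  have hρ1 : ρ ≤ 1 := by
    have : r/2 ≤ 1 := by rw [hrdef]; linarith
    linarith
  -- the compact annulus A depending on ρ, and the bound M₁ for F on it
  set A : Set ℂ := Metric.closedBall z₀ R \ Metric.ball z₀ (ρ/2) with hAdef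
  have hAsub : A ⊆ D \ {z₀} := by
    rintro x ⟨hx1, hx2⟩
    refine ⟨hRD hx1, ?_⟩
    simp only [Set.mem_singleton_iff]
    intro hxz
    apply hx2
    rw [hxz]
    exact Metric.mem_ball_self (by positivity)
  have hAcpt : IsCompact A := (isCompact_closedBall z₀ R).diff Metric.isOpen_ball
  obtain ⟨M₁', hM₁'⟩ := hAcpt.exists_bound_of_continuousOn (hFcont.mono hAsub)
  set M₁ : ℝ := max M₁' 0 with hM₁def
  have hM₁0 : 0 ≤ M₁ := le_max_right _ _
  have hM₁b : ∀ y ∈ A, ‖F y‖ ≤ M₁ := fun y hy => le_trans (hM₁' y hy) (le_max_left _ _)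
  have hK₀A : K₀ ⊆ A := by
    rintro x ⟨hx1, hx2⟩
    refine ⟨hx1, fun hc => hx2 ?_⟩
    rw [Metric.mem_ball] at hc ⊢
    calc dist x z₀ < ρ/2 := hc
    _ < r/2 := by linarith
  -- pick one n with uniform spherical closeness on A
  set ε : ℝ := min (epsFor M₀) (epsFor M₁) with hεdef
  have hε0 : 0 < ε := lt_min (epsFor_pos _) (epsFor_pos _)
  obtain ⟨n, hunif⟩ := (hconv.uniform_on_compact hAcpt hAsub hε0).exists
  obtain ⟨a, ha⟩ := hpoles n
  set S : Finset (Fin p) := Finset.univ.filter (fun j : Fin p => a j ∈ Metric.ball z₀ (ρ/2))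
    with hSdef
  set Q : ℂ → ℂ := fun z => ∏ j ∈ S, (z - a j) with hQdef
  have hQan : ∀ y : ℂ, AnalyticAt ℂ Q y := fun y =>
    Finset.analyticAt_fun_prod _ (fun j _ => analyticAt_id.sub analyticAt_const)
  have hcard : S.card ≤ p := by
    calc S.card ≤ Finset.univ.card := Finset.card_filter_le _ _
    _ = p := by simp
  -- decoding the spherical closeness on A
  have hdecode : ∀ y ∈ A, y ∉ polesOf (f n) ∧ ‖f n y - F y‖ < 1 := by
    intro y hy
    have h2 : sphDist (toSphere (f n) y) (F y) < epsFor M₁ :=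
      lt_of_lt_of_le (hunif y hy) (min_le_right _ _)
    obtain ⟨u, hu, hud⟩ := sphDist_lt_imp hM₁0 _ (hM₁b y hy) h2
    obtain ⟨hnp, hfu⟩ := toSphere_eq_some hu
    exact ⟨hnp, by rwa [hfu]⟩
  have hbound₀ : ∀ y ∈ K₀, ‖f n y‖ ≤ M₀ + 1 := by
    intro y hy
    have h2 : sphDist (toSphere (f n) y) (F y) < epsFor M₀ :=
      lt_of_lt_of_le (hunif y (hK₀A hy)) (min_le_left _ _)
    obtain ⟨u, hu, hud⟩ := sphDist_lt_imp hM₀0 _ (hM₀b y hy) h2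
    obtain ⟨hnp, hfu⟩ := toSphere_eq_some hu
    rw [hfu]
    calc ‖u‖ = ‖(u - F y) + F y‖ := by ring_nf
    _ ≤ ‖u - F y‖ + ‖F y‖ := norm_add_le _ _
    _ ≤ M₀ + 1 := by have := hM₀b y hy; linarith
  have horder : ∀ y ∈ A, ∀ h : MeromorphicAt (f n) y, (0 : WithTop ℤ) ≤ meromorphicOrderAt (f n) y := by
    intro y hy h
    by_contra hc
    push_neg at hc
    exact (hdecode y hy).1 (h.tendsto_atTop_of_order_neg hc)
  -- local analytic representatives for Q * f n on the ball
  have hrep : ∀ y ∈ Metric.ball z₀ R, ∃ ψ : ℂ → ℂ, AnalyticAt ℂ ψ y ∧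
      ∀ᶠ z in 𝓝[≠] y, Q z * f n z = ψ z := by
    intro y hy
    by_cases hyn : y ∈ Metric.ball z₀ (ρ/2)
    · -- near z₀ : use the pole bound
      have hyD : y ∈ D := hRD (Metric.ball_subset_closedBall hy)
      obtain ⟨hm, hord⟩ := ha y hyD
      obtain ⟨Ψ, hΨan, hΨeq⟩ := hm.exists_analytic_rep hord
      set Rc : ℂ → ℂ :=
        fun z => ∏ j ∈ Finset.univ.filter (fun j => ¬ (a j ∈ Metric.ball z₀ (ρ/2))), (z - a j)
        with hRcdef
      have hRcan : AnalyticAt ℂ Rc y :=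
        Finset.analyticAt_fun_prod _ (fun j _ => analyticAt_id.sub analyticAt_const)
      have hRcy : Rc y ≠ 0 := by
        rw [hRcdef]
        apply Finset.prod_ne_zero_iff.mpr
        intro j hj h0
        rw [Finset.mem_filter] at hj
        apply hj.2
        rw [sub_eq_zero] at h0
        rw [← h0]
        exact hyn
      refine ⟨fun z => Ψ z / Rc z, hΨan.div hRcan hRcy, ?_⟩
      have hRcne : ∀ᶠ z in 𝓝[≠] y, Rc z ≠ 0 :=
        (hRcan.continuousAt.eventually_ne hRcy).filter_mono nhdsWithin_le_nhds
      filter_upwards [hΨeq, hRcne] with z h1 h2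
      have hsplit : Q z * Rc z = ∏ j, (z - a j) :=
        Finset.prod_filter_mul_prod_filter_not Finset.univ _ _
      rw [eq_div_iff h2, ← h1, ← hsplit]
      ring
    · -- in the annulus : f n has nonnegative order
      have hyA : y ∈ A := ⟨Metric.ball_subset_closedBall hy, hyn⟩
      have hyD : y ∈ D := (hAsub hyA).1
      obtain ⟨ψ₀, hψ₀an, hψ₀eq⟩ := (hf n y hyD).exists_analytic_rep (horder y hyA (hf n y hyD))
      refine ⟨fun z => Q z * ψ₀ z, (hQan y).mul hψ₀an, ?_⟩
      filter_upwards [hψ₀eq] with z h1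
      rw [h1]
  -- the analytic "cleaned-up" version g of Q * f n
  set g : ℂ → ℂ := fun y => limUnder (𝓝[≠] y) (fun z => Q z * f n z) with hgdef
  have htend : ∀ (y : ℂ) (ψ : ℂ → ℂ), AnalyticAt ℂ ψ y →
      (∀ᶠ z in 𝓝[≠] y, Q z * f n z = ψ z) →
      Filter.Tendsto (fun z => Q z * f n z) (𝓝[≠] y) (𝓝 (ψ y)) ∧ g y = ψ y := by
    intro y ψ hψ heq
    have heq' : (fun z => Q z * f n z) =ᶠ[𝓝[≠] y] ψ := heq
    have ht : Filter.Tendsto (fun z => Q z * f n z) (𝓝[≠] y) (𝓝 (ψ y)) :=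
      Filter.Tendsto.congr' heq'.symm (hψ.continuousAt.mono_left nhdsWithin_le_nhds)
    exact ⟨ht, ht.limUnder_eq⟩
  have hgan : ∀ y ∈ Metric.ball z₀ R, AnalyticAt ℂ g y := by
    intro y hy
    obtain ⟨ψ, hψan, hψeq⟩ := hrep y hy
    have hev : ∀ᶠ z in 𝓝 y, (z ≠ y → Q z * f n z = ψ z) ∧ AnalyticAt ℂ ψ z := by
      refine Filter.Eventually.and ?_ hψan.eventually_analyticAt
      have := eventually_nhdsWithin_iff.mp hψeq
      exact this.mono fun z hz hne => hz hne
    obtain ⟨O, hOsub, hOopen, hyO⟩ := eventually_nhds_iff.mp hev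
    have hgψ : ∀ z ∈ O, g z = ψ z := by
      intro z hz
      rcases eq_or_ne z y with rfl | hne
      · exact (htend z ψ hψan hψeq).2
      · have heqz : ∀ᶠ u in 𝓝[≠] z, Q u * f n u = ψ u := by
          filter_upwards [nhdsWithin_le_nhds (hOopen.mem_nhds hz),
            (eventually_ne_nhds hne).filter_mono nhdsWithin_le_nhds] with u hu hune
          exact (hOsub u hu).1 hune
        exact (htend z ψ (hOsub z hz).2 heqz).2
    have hgψev : g =ᶠ[𝓝 y] ψ := eventually_nhds_iff.mpr ⟨O, hgψ, hOopen, hyO⟩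
    exact hψan.congr hgψev.symm
  -- boundary bound for g on the sphere of radius r
  have hgb_sphere : ∀ y ∈ Metric.sphere z₀ r, ‖g y‖ ≤ Bd := by
    intro y hy
    rw [Metric.mem_sphere] at hy
    have hyball : y ∈ Metric.ball z₀ R := by
      rw [Metric.mem_ball, hy, hrdef]; linarith
    obtain ⟨ψ, hψan, hψeq⟩ := hrep y hyball
    obtain ⟨ht, hg⟩ := htend y ψ hψan hψeq
    rw [hg]
    have hevb : ∀ᶠ z in 𝓝[≠] y, ‖Q z * f n z‖ ≤ Bd := by
      have hO : {z : ℂ | r/2 < dist z z₀ ∧ dist z z₀ < R} ∈ 𝓝 y := by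
        apply IsOpen.mem_nhds
        · exact (isOpen_lt continuous_const (continuous_id.dist continuous_const)).inter
            (isOpen_lt (continuous_id.dist continuous_const) continuous_const)
        · constructor
          · rw [hy]; linarith
          · rw [hy, hrdef]; linarith
      filter_upwards [nhdsWithin_le_nhds hO] with z hz
      have hzK : z ∈ K₀ := by
        refine ⟨Metric.mem_closedBall.mpr hz.2.le, fun hc => ?_⟩
        rw [Metric.mem_ball] at hc
        linarith [hz.1]
      have h1 : ‖f n z‖ ≤ M₀ + 1 := hbound₀ z hzK
      have hQb : ‖Q z‖ ≤ 2 ^ p := by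
        rw [hQdef]
        simp only
        rw [norm_prod]
        calc ∏ j ∈ S, ‖z - a j‖ ≤ ∏ j ∈ S, 2 := by
              apply Finset.prod_le_prod (fun j _ => norm_nonneg _)
              intro j hj
              rw [hSdef, Finset.mem_filter] at hj
              have hja : ‖a j - z₀‖ < ρ/2 := by
                have := hj.2
                rwa [Metric.mem_ball, dist_eq_norm] at this
              calc ‖z - a j‖ = ‖(z - z₀) - (a j - z₀)‖ := by ring_nf
              _ ≤ ‖z - z₀‖ + ‖a j - z₀‖ := norm_sub_le _ _
              _ ≤ R + ρ/2 := by
                  have : dist z z₀ < R := hz.2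
                  rw [dist_eq_norm] at this
                  linarith
              _ ≤ 2 := by linarith
        _ = 2 ^ S.card := Finset.prod_const 2
        _ ≤ 2 ^ p := pow_le_pow_right₀ (by norm_num) hcard
      calc ‖Q z * f n z‖ = ‖Q z‖ * ‖f n z‖ := norm_mul _ _
      _ ≤ 2 ^ p * (M₀ + 1) := mul_le_mul hQb h1 (norm_nonneg _) (by positivity)
    exact le_of_tendsto ht.norm hevb
  -- maximum principle: g is bounded by Bd on the closed ball of radius r
  have hgball : ∀ z ∈ Metric.closedBall z₀ r, ‖g z‖ ≤ Bd := by
    have hsub : Metric.closedBall z₀ r ⊆ Metric.ball z₀ R := by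
      apply Metric.closedBall_subset_ball
      rw [hrdef]; linarith
    intro z hz
    apply Complex.norm_le_of_forall_mem_frontier_norm_le Metric.isBounded_ball
      (U := Metric.ball z₀ r)
    · constructor
      · intro x hx
        exact (hgan x (hsub (Metric.ball_subset_closedBall hx))).differentiableAt
          |>.differentiableWithinAt
      · rw [closure_ball z₀ (ne_of_gt hr0)]
        intro x hx
        exact (hgan x (hsub hx)).continuousAt.continuousWithinAt
    · intro x hx
      rw [frontier_ball z₀ (ne_of_gt hr0)] at hx
      exact hgb_sphere x hx
    · rwa [closure_ball z₀ (ne_of_gt hr0)]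
  -- radial evaluation near w
  have hwD : w ∈ D := by
    apply hRD
    rw [Metric.mem_closedBall, dist_eq_norm]
    rw [hrdef] at hρr
    linarith
  set seg : ℝ → ℂ := fun t => z₀ + t • (w - z₀) with hsegdef
  have htendsW : Filter.Tendsto seg (𝓝[<] (1:ℝ)) (𝓝[≠] w) := by
    apply tendsto_nhdsWithin_of_tendsto_nhds_of_eventually_within
    · have hc : Filter.Tendsto seg (𝓝 (1:ℝ)) (𝓝 (z₀ + (1:ℝ) • (w - z₀))) :=
        (continuous_const.add (continuous_id.smul continuous_const)).continuousAt
      have : z₀ + (1:ℝ) • (w - z₀) = w := by rw [one_smul]; ring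
      rw [this] at hc
      exact hc.mono_left nhdsWithin_le_nhds
    · filter_upwards [self_mem_nhdsWithin] with t ht
      simp only [Set.mem_Iio] at ht
      simp only [Set.mem_compl_iff, Set.mem_singleton_iff]
      intro hc
      have h0 : (t - 1) • (w - z₀) = seg t - w := by
        rw [hsegdef]
        simp only
        rw [sub_smul, one_smul]
        ring
      rw [hc, sub_self] at h0
      rcases smul_eq_zero.mp h0 with h1 | h1
      · exact absurd (by linarith [sub_eq_zero.mp h1] : (1:ℝ) < 1) (lt_irrefl 1)
      · exact hw (sub_eq_zero.mp h1)
  have hfnan : ∀ᶠ t in 𝓝[<] (1:ℝ), AnalyticAt ℂ (f n) (seg t) :=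
    htendsW.eventually (hf n w hwD).eventually_analyticAt
  have ht34 : ∀ᶠ t in 𝓝[<] (1:ℝ), t ∈ Set.Ioo (3/4 : ℝ) 1 :=
    Ioo_mem_nhdsLT_of_mem (by constructor <;> norm_num)
  have hFbound_t : ∀ᶠ t in 𝓝[<] (1:ℝ), ‖F (seg t)‖ ≤ Bd * 4 ^ p / ρ ^ p + 1 := by
    filter_upwards [hfnan, ht34] with t hAn ht
    obtain ⟨ht3, ht1⟩ := ht
    have ht0 : 0 < t := by linarith
    have hdistz : ‖seg t - z₀‖ = t * ρ := by
      have : seg t - z₀ = t • (w - z₀) := by rw [hsegdef]; ring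
      rw [this, norm_smul, Real.norm_eq_abs, abs_of_pos ht0, hρdef]
    have h34 : 3/4 * ρ < ‖seg t - z₀‖ := by
      rw [hdistz]
      exact mul_lt_mul_of_pos_right ht3 hρ0
    have hlt : ‖seg t - z₀‖ < ρ := by
      rw [hdistz]
      nlinarith
    have hzA : seg t ∈ A := by
      constructor
      · rw [Metric.mem_closedBall, dist_eq_norm]
        rw [hrdef] at hρr
        linarith
      · intro hc
        rw [Metric.mem_ball, dist_eq_norm] at hc
        linarith
    have hzbr : seg t ∈ Metric.closedBall z₀ r := by
      rw [Metric.mem_closedBall, dist_eq_norm]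
      rw [hrdef] at hρr
      linarith
    have hQfan : AnalyticAt ℂ (fun u => Q u * f n u) (seg t) := (hQan _).mul hAn
    have hgz : g (seg t) = Q (seg t) * f n (seg t) :=
      (htend (seg t) _ hQfan (Filter.Eventually.of_forall fun _ => rfl)).2
    have hb1 : ‖Q (seg t) * f n (seg t)‖ ≤ Bd := by
      rw [← hgz]
      exact hgball _ hzbr
    have hQlow : (ρ/4) ^ p ≤ ‖Q (seg t)‖ := by
      have h1 : ∀ j ∈ S, ρ/4 ≤ ‖seg t - a j‖ := by
        intro j hj
        rw [hSdef, Finset.mem_filter] at hj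
        have hja : ‖a j - z₀‖ < ρ/2 := by
          have := hj.2
          rwa [Metric.mem_ball, dist_eq_norm] at this
        have hkey : ‖seg t - z₀‖ - ‖a j - z₀‖ ≤ ‖seg t - a j‖ := by
          have := norm_sub_norm_le (seg t - z₀) (a j - z₀)
          have heq : (seg t - z₀) - (a j - z₀) = seg t - a j := by ring
          rwa [heq] at this
        linarith
      calc (ρ/4) ^ p ≤ (ρ/4) ^ S.card := by
            apply pow_le_pow_of_le_one (by positivity) (by linarith) hcard
      _ = ∏ _j ∈ S, (ρ/4) := (Finset.prod_const _).symm
      _ ≤ ∏ j ∈ S, ‖seg t - a j‖ := Finset.prod_le_prod (fun _ _ => by positivity) h1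
      _ = ‖Q (seg t)‖ := by rw [hQdef]; simp only; rw [norm_prod]
    have hQpos : 0 < ‖Q (seg t)‖ := lt_of_lt_of_le (by positivity) hQlow
    have hfnb : ‖f n (seg t)‖ ≤ Bd / (ρ/4) ^ p := by
      rw [le_div_iff₀ (by positivity)]
      calc ‖f n (seg t)‖ * (ρ/4) ^ p ≤ ‖f n (seg t)‖ * ‖Q (seg t)‖ := by
            apply mul_le_mul_of_nonneg_left hQlow (norm_nonneg _)
      _ = ‖Q (seg t) * f n (seg t)‖ := by rw [norm_mul, mul_comm]
      _ ≤ Bd := hb1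
    have hclose : ‖f n (seg t) - F (seg t)‖ < 1 := (hdecode _ hzA).2
    have hFz : ‖F (seg t)‖ ≤ ‖f n (seg t)‖ + 1 := by
      have h2 : ‖F (seg t)‖ - ‖f n (seg t)‖ ≤ ‖F (seg t) - f n (seg t)‖ :=
        norm_sub_norm_le _ _
      rw [norm_sub_rev] at h2
      linarith
    have hdiv : Bd / (ρ/4) ^ p = Bd * 4 ^ p / ρ ^ p := by
      rw [div_pow, div_div_eq_mul_div]
    rw [hdiv] at hfnb
    linarith
  have hFw : Filter.Tendsto (fun t => ‖F (seg t)‖) (𝓝[<] (1:ℝ)) (𝓝 ‖F w‖) := by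
    have hFc : ContinuousAt F w := by
      have hmem : D \ {z₀} ∈ 𝓝 w :=
        (hDopen.sdiff isClosed_singleton).mem_nhds ⟨hwD, hw⟩
      exact (hF.differentiableAt hmem).continuousAt
    exact (hFc.tendsto.comp (htendsW.mono_right nhdsWithin_le_nhds)).norm
  have hfin : ‖F w‖ ≤ Bd * 4 ^ p / ρ ^ p + 1 := le_of_tendsto hFw hFbound_t
  have hρp0 : 0 < ρ ^ p := by positivity
  have hρp1 : ρ ^ p ≤ 1 := pow_le_one₀ (le_of_lt hρ0) hρ1
  calc ‖F w‖ ≤ Bd * 4 ^ p / ρ ^ p + 1 := hfin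
  _ ≤ Bd * 4 ^ p / ρ ^ p + 1 / ρ ^ p := by
      apply add_le_add_right
      rw [le_div_iff₀ hρp0]
      linarith
  _ = (Bd * 4 ^ p + 1) / ρ ^ p := by rw [add_div]


/-- **Lemma (no essential singularity of the limit).**
Let `D ⊆ ℂ` be a domain, `z₀ ∈ D`, `p ≥ 1`, and suppose the meromorphic functions `fₙ` on
`D` converge locally uniformly (spherically) on `D \ {z₀}` to `F` holomorphic on `D \ {z₀}`.
If each `fₙ` has at most `p` poles in `D` counted with multiplicity (i.e. multiplying by a
monic polynomial of degree `p` removes all poles), then `F` extends meromorphically to `z₀`,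
i.e. `F` has no essential singularity at `z₀`. -/
theorem no_essential_singularity_of_limit
    (D : Set ℂ) (hDopen : IsOpen D) (hDconn : IsConnected D)
    (z₀ : ℂ) (hz₀ : z₀ ∈ D) (p : ℕ) (hp : 1 ≤ p)
    (f : ℕ → ℂ → ℂ) (hf : ∀ n, MeromorphicOn (f n) D)
    (F : ℂ → ℂ) (hF : DifferentiableOn ℂ F (D \ {z₀}))
    (hconv : SphLocUnifOn (fun n => toSphere (f n)) (fun z => (F z : OnePoint ℂ))
      (D \ {z₀}))
    (hpoles : ∀ n, ∃ a : Fin p → ℂ, ∀ z ∈ D,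
      ∃ h : MeromorphicAt (fun w => (∏ j, (w - a j)) * f n w) z,
        (0 : WithTop ℤ) ≤ meromorphicOrderAt (fun w => (∏ j, (w - a j)) * f n w) z) :
    MeromorphicAt F z₀ := by
  obtain ⟨C, hC, r₁, hr₁, hb⟩ := key_bound D hDopen z₀ hz₀ p f hf F hF hconv hpoles
  have hd : ∀ᶠ z in 𝓝[≠] z₀, DifferentiableAt ℂ F z := by
    filter_upwards [nhdsWithin_le_nhds (hDopen.mem_nhds hz₀), self_mem_nhdsWithin]
      with z hzD hzne
    exact hF.differentiableAt ((hDopen.sdiff isClosed_singleton).mem_nhds ⟨hzD, hzne⟩)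
  exact meromorphicAt_of_bound hd hr₁ hb

end
end
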